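/- For every n ≥ 2 there is no permutation π of I_n = {0,…,2^n−1} induced by an automorphism of the rooted binary tree — that is, no permutation π such that for all c, d ∈ I_n and all 0 ≤ m ≤ n, if the binary expansions of c and d agree in their first m digits then the binary expansions of π(c) and π(d) agree in their first m digits — whose permutation matrix P_π (with P_π e_j = e_{π(j)}) satisfies P_πᵀ M_B^{(n)} P_π = M_L^{(n)}. -/

import Mathlib

open Matrix

/-- Equivalence identifying `Fin (2^n) ⊕ Fin (2^n)` with `Fin (2^(n+1))`. -/
def blockEquiv (n : ℕ) : Fin (2 ^ n) ⊕ Fin (2 ^ n) ≃ Fin (2 ^ (n + 1)) :=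
  finSumFinEquiv.trans (finCongr (by rw [pow_succ, mul_two]))

/-- Assemble a `2^(n+1) × 2^(n+1)` matrix from four `2^n × 2^n` blocks. -/
noncomputable def mkBlock {n : ℕ} (A B C D : Matrix (Fin (2 ^ n)) (Fin (2 ^ n)) ℝ) :
    Matrix (Fin (2 ^ (n + 1))) (Fin (2 ^ (n + 1))) ℝ :=
  Matrix.reindex (blockEquiv n) (blockEquiv n) (Matrix.fromBlocks A B C D)

/-- The pair of BBS translation generators. -/
noncomputable def abB : (n : ℕ) →
    Matrix (Fin (2 ^ n)) (Fin (2 ^ n)) ℝ × Matrix (Fin (2 ^ n)) (Fin (2 ^ n)) ℝ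
  | 0 => (1, 1)
  | n + 1 => (mkBlock (abB n).1 (abB n).2 0 0, mkBlock 0 0 (abB n).1 (abB n).2)

noncomputable def aB (n : ℕ) : Matrix (Fin (2 ^ n)) (Fin (2 ^ n)) ℝ := (abB n).1
noncomputable def bB (n : ℕ) : Matrix (Fin (2 ^ n)) (Fin (2 ^ n)) ℝ := (abB n).2

/-- The pair of lamplighter generators. -/
noncomputable def abL : (n : ℕ) →
    Matrix (Fin (2 ^ n)) (Fin (2 ^ n)) ℝ × Matrix (Fin (2 ^ n)) (Fin (2 ^ n)) ℝ
  | 0 => (1, 1)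
  | n + 1 => (mkBlock 0 (abL n).2 (abL n).1 0, mkBlock (abL n).1 0 0 (abL n).2)

noncomputable def aL (n : ℕ) : Matrix (Fin (2 ^ n)) (Fin (2 ^ n)) ℝ := (abL n).1
noncomputable def bL (n : ℕ) : Matrix (Fin (2 ^ n)) (Fin (2 ^ n)) ℝ := (abL n).2

/-- The BBS translation transition operator. -/
noncomputable def MB (n : ℕ) : Matrix (Fin (2 ^ n)) (Fin (2 ^ n)) ℝ :=
  (1 / 4 : ℝ) • (aB n + (aB n)ᵀ + bB n + (bB n)ᵀ)

/-- The lamplighter transition operator. -/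
noncomputable def ML (n : ℕ) : Matrix (Fin (2 ^ n)) (Fin (2 ^ n)) ℝ :=
  (1 / 4 : ℝ) • (aL n + (aL n)ᵀ + bL n + (bL n)ᵀ)

/-- The `j`-th binary digit (`1 ≤ j ≤ n`, most significant first) of `c ∈ {0, …, 2ⁿ−1}`:
`c = Σ_{j=1}^n c_j 2^{n−j}`. -/
def digit (n c j : ℕ) : ℕ := c / 2 ^ (n - j) % 2

/-- The permutation matrix `P_π` with `P_π e_j = e_{π j}`. -/
noncomputable def permMatrix {N : ℕ} (π : Equiv.Perm (Fin N)) : Matrix (Fin N) (Fin N) ℝ :=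
  Matrix.of fun i j => if i = π j then (1 : ℝ) else 0

/-- `π` is induced by an automorphism of the rooted binary tree: whenever the binary
expansions of `c` and `d` agree in their first `m` digits, so do those of `π c` and
`π d`. -/
def IsTreeAut (n : ℕ) (π : Equiv.Perm (Fin (2 ^ n))) : Prop :=
  ∀ c d : Fin (2 ^ n), ∀ m ≤ n,
    (∀ j, 1 ≤ j → j ≤ m → digit n (c : ℕ) j = digit n (d : ℕ) j) →
    ∀ j, 1 ≤ j → j ≤ m → digit n ((π c : Fin (2 ^ n)) : ℕ) j = digit n ((π d : Fin (2 ^ n)) : ℕ) j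

/-! The diagonal of `M_L⁽ⁿ⁾` equals `1/2` at the two sibling leaves `2ⁿ - 2` and `2ⁿ - 1`, while
the diagonal of `M_B⁽ⁿ⁾` equals `1/2` only at the leaves `0` and `2ⁿ - 1`. Conjugation by a
permutation matrix permutes diagonal entries, so `π` maps the two siblings onto `{0, 2ⁿ - 1}`;
but a tree automorphism preserves the first binary digit shared by siblings, whereas `0` and
`2ⁿ - 1` differ in it. -/

@[simp]
lemma blockEquiv_inl_val (n : ℕ) (i : Fin (2 ^ n)) :
    (blockEquiv n (Sum.inl i) : ℕ) = i := by
  simp [blockEquiv]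

@[simp]
lemma blockEquiv_inr_val (n : ℕ) (i : Fin (2 ^ n)) :
    (blockEquiv n (Sum.inr i) : ℕ) = 2 ^ n + i := by
  simp [blockEquiv]
  omega

@[simp]
lemma mkBlock_blockEquiv {n : ℕ} (A B C D : Matrix (Fin (2 ^ n)) (Fin (2 ^ n)) ℝ)
    (u v : Fin (2 ^ n) ⊕ Fin (2 ^ n)) :
    mkBlock A B C D (blockEquiv n u) (blockEquiv n v) = fromBlocks A B C D u v := by
  simp [mkBlock]

lemma aB_succ (n : ℕ) : aB (n + 1) = mkBlock (aB n) (bB n) 0 0 := rfl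
lemma bB_succ (n : ℕ) : bB (n + 1) = mkBlock 0 0 (aB n) (bB n) := rfl
lemma aL_succ (n : ℕ) : aL (n + 1) = mkBlock 0 (bL n) (aL n) 0 := rfl
lemma bL_succ (n : ℕ) : bL (n + 1) = mkBlock (aL n) 0 0 (bL n) := rfl

lemma aB_apply_self : ∀ (n : ℕ) (c : Fin (2 ^ n)), aB n c c = if (c : ℕ) = 0 then 1 else 0
  | 0, c => by simp [aB, abB]
  | n + 1, c => by
    obtain ⟨u, rfl⟩ := (blockEquiv n).surjective c
    rcases u with i | i
    · simpa [aB_succ] using aB_apply_self n i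
    · simp [aB_succ]

lemma bB_apply_self : ∀ (n : ℕ) (c : Fin (2 ^ n)),
    bB n c c = if (c : ℕ) = 2 ^ n - 1 then 1 else 0
  | 0, c => by simp [bB, abB]
  | n + 1, c => by
    obtain ⟨u, rfl⟩ := (blockEquiv n).surjective c
    have hpow : 2 ^ (n + 1) = 2 * 2 ^ n := by ring
    rcases u with i | i
    · have : (i : ℕ) ≠ 2 ^ (n + 1) - 1 := by omega
      simp [bB_succ, this]
    · have hlast : 2 ^ n + (i : ℕ) = 2 ^ (n + 1) - 1 ↔ (i : ℕ) = 2 ^ n - 1 := by omega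
      simp [bB_succ, hlast, bB_apply_self n i]

lemma aL_succ_apply_self (n : ℕ) (c : Fin (2 ^ (n + 1))) : aL (n + 1) c c = 0 := by
  obtain ⟨u, rfl⟩ := (blockEquiv n).surjective c
  rcases u with i | i <;> simp [aL_succ]

lemma bL_apply_self_of_le : ∀ (n : ℕ) (c : Fin (2 ^ n)), 2 ^ n ≤ (c : ℕ) + 2 → bL n c c = 1
  | 0, c, _ => by simp [bL, abL]
  | n + 1, c, hc => by
    obtain ⟨u, rfl⟩ := (blockEquiv n).surjective c
    have hpow : 2 ^ (n + 1) = 2 * 2 ^ n := by ring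
    rcases u with i | i
    · -- only possible when `n = 0`, where the block `aL 0` is `1`
      obtain rfl : n = 0 := by
        by_contra h
        have : 2 ≤ 2 ^ n := Nat.le_self_pow h 2
        simp only [blockEquiv_inl_val] at hc
        omega
      rw [bL_succ, mkBlock_blockEquiv]
      simp [aL, abL]
    · simp only [blockEquiv_inr_val] at hc
      simpa [bL_succ] using bL_apply_self_of_le n i (by omega)

lemma quarter_smul_add_transpose_apply_self {ι : Type*} (a b : Matrix ι ι ℝ) (c : ι) :
    ((1 / 4 : ℝ) • (a + aᵀ + b + bᵀ)) c c = (a c c + b c c) / 2 := by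
  simp only [Matrix.smul_apply, Matrix.add_apply, transpose_apply, smul_eq_mul]
  ring

lemma ML_apply_self_of_le {n : ℕ} (hn : 1 ≤ n) (c : Fin (2 ^ n)) (hc : 2 ^ n ≤ (c : ℕ) + 2) :
    ML n c c = 1 / 2 := by
  obtain ⟨m, rfl⟩ : ∃ m, n = m + 1 := ⟨n - 1, by omega⟩
  rw [ML, quarter_smul_add_transpose_apply_self, aL_succ_apply_self, bL_apply_self_of_le _ c hc]
  norm_num

lemma eq_zero_or_eq_last_of_MB_apply_self {n : ℕ} (c : Fin (2 ^ n)) (hc : MB n c c = 1 / 2) :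
    (c : ℕ) = 0 ∨ (c : ℕ) = 2 ^ n - 1 := by
  rw [MB, quarter_smul_add_transpose_apply_self, aB_apply_self, bB_apply_self] at hc
  by_contra! h
  simp [h.1, h.2] at hc

lemma permMatrix_transpose_mul_mul_permMatrix_apply {N : ℕ} (π : Equiv.Perm (Fin N))
    (M : Matrix (Fin N) (Fin N) ℝ) (i j : Fin N) :
    ((permMatrix π)ᵀ * M * permMatrix π) i j = M (π i) (π j) := by
  simp [mul_apply, permMatrix, ite_mul, mul_ite, Finset.sum_ite_eq']

lemma digit_one_eq_zero_of_lt {n c : ℕ} (hc : c < 2 ^ (n - 1)) : digit n c 1 = 0 := by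
  simp [digit, Nat.div_eq_of_lt hc]

lemma digit_one_eq_one_of_le_of_lt {n c : ℕ} (hn : 1 ≤ n) (hc₁ : 2 ^ (n - 1) ≤ c) (hc₂ : c < 2 ^ n) :
    digit n c 1 = 1 := by
  have hpow : 2 * 2 ^ (n - 1) = 2 ^ n := mul_pow_sub_one (by omega) 2
  have : c / 2 ^ (n - 1) = 1 := by
    rw [Nat.div_eq_iff (Nat.two_pow_pos _)]
    omega
  simp [digit, this]

lemma IsTreeAut.digit_one_eq {n : ℕ} {π : Equiv.Perm (Fin (2 ^ n))} (hπ : IsTreeAut n π)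
    (hn : 1 ≤ n) {c d : Fin (2 ^ n)} (h : digit n c 1 = digit n d 1) :
    digit n (π c) 1 = digit n (π d) 1 :=
  hπ c d 1 hn (fun j hj₁ hj₂ => by rwa [show j = 1 by omega]) 1 le_rfl le_rfl

/-- For `n ≥ 2`, no permutation of `{0, …, 2ⁿ−1}` induced by an
automorphism of the rooted binary tree conjugates `M_B⁽ⁿ⁾` into `M_L⁽ⁿ⁾`. -/
theorem no_tree_automorphism_conjugation (n : ℕ) (hn : 2 ≤ n) :
    ¬ ∃ π : Equiv.Perm (Fin (2 ^ n)), IsTreeAut n π ∧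
        (permMatrix π)ᵀ * MB n * permMatrix π = ML n := by
  rintro ⟨π, hπ, hconj⟩
  have hpow : 2 * 2 ^ (n - 1) = 2 ^ n := mul_pow_sub_one (by omega) 2
  have hhalf : 2 ≤ 2 ^ (n - 1) := Nat.le_self_pow (by omega) 2
  let sib : Fin (2 ^ n) := ⟨2 ^ n - 2, by omega⟩
  let last : Fin (2 ^ n) := ⟨2 ^ n - 1, by omega⟩
  have hsib : (sib : ℕ) = 2 ^ n - 2 := rfl
  have hlast : (last : ℕ) = 2 ^ n - 1 := rfl
  have hleaf : ∀ c : Fin (2 ^ n), 2 ^ n ≤ (c : ℕ) + 2 →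
      (π c : ℕ) = 0 ∨ (π c : ℕ) = 2 ^ n - 1 := fun c hc =>
    eq_zero_or_eq_last_of_MB_apply_self _ <| by
      rw [← permMatrix_transpose_mul_mul_permMatrix_apply π (MB n), hconj,
        ML_apply_self_of_le (by omega) c hc]
  have hne : (π sib : ℕ) ≠ π last := fun h => by
    have := congrArg Fin.val (π.injective (Fin.ext h))
    omega
  have hdigit : digit n (π sib) 1 = digit n (π last) 1 :=
    hπ.digit_one_eq (by omega) <| by
      rw [digit_one_eq_one_of_le_of_lt (by omega) (by omega) (by omega),
        digit_one_eq_one_of_le_of_lt (by omega) (by omega) (by omega)]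
  have hd₀ : digit n 0 1 = 0 := digit_one_eq_zero_of_lt (Nat.two_pow_pos _)
  have hd₁ : digit n (2 ^ n - 1) 1 = 1 := digit_one_eq_one_of_le_of_lt (by omega) (by omega) (by omega)
  rcases hleaf sib (by omega) with h | h <;> rcases hleaf last (by omega) with h' | h' <;>
    simp_all
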